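/- Let n = 3 with 2 ≤ r_1 ≤ r_2 ≤ r_3 and assume d ∈ V_3. For c = (c_1,c_2,c_3) ∈ ℤ^3, the following are equivalent: (a) there exists x ∈ ℝ^d with −1 < x_k ≤ 0 for all k = 1,…,d and c_j − 1 < τ_j(x) ≤ c_j for j = 1,2,3; (b) c ∈ C(r_1,r_2,r_3). (Consequently the conic divisorial ideals of the edge ring k[K_{r_1,r_2,r_3}] are in one-to-one correspondence with the lattice points of C(r_1,r_2,r_3).) -/

import Mathlib

/-!
In the block sums `S₁ = Σ_{V₁} x`, `S₂ = Σ_{V₂} x`, `u = x_d`, `T = Σ_{V₃ ∖ {d}} x` the forms are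
`τ₁ = S₂ - u`, `τ₂ = S₁ - u`, `τ₃ = τ₁ + τ₂ - T`, and as `x` runs over `(-1, 0]^d` the block sums
run independently over `(-r₁, 0] × (-r₂, 0] × (-1, 0] × (-(r₃ - 1), 0]`. The question is thus a
feasibility problem in four real variables. Eliminating them and using that `c` is integral gives
the inequalities of `C(r₁, r₂, r₃)`. Conversely, for `c ∈ C` one picks `τ₁, τ₂` just below `c₁, c₂`,
with fractional parts chosen according to whether `c₁ + c₂ - c₃ = 1` and to the sign of `c₁ - c₂`,
then `u = -max(0, τ₁, τ₂)` and finally `T`.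
-/

/-- The linear form `τ_j(x) = Σ_{k ∈ V_1 ∪ V_2} x_k - Σ_{ℓ ∈ V_j} x_ℓ - x_d` (for
`n = 3`, where `vlast` is the last coordinate `d`). -/
noncomputable def tau3 (d : ℕ) (V1 V2 Vj : Finset (Fin d)) (vlast : Fin d)
    (x : Fin d → ℝ) : ℝ :=
  (∑ k ∈ V1 ∪ V2, x k) - (∑ k ∈ Vj, x k) - x vlast

/-- Membership of `(z_1,z_2,z_3) ∈ ℤ^3` in the polytope `C(r_1,r_2,r_3)`. -/
def inC3 (r1 r2 r3 : ℕ) (z1 z2 z3 : ℤ) : Prop :=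
  -(r2 : ℤ) ≤ z1 - z2 ∧ z1 - z2 ≤ (r1 : ℤ) ∧
  -(r3 : ℤ) ≤ z1 - z3 ∧ z1 - z3 ≤ (r1 : ℤ) ∧
  -(r3 : ℤ) ≤ z2 - z3 ∧ z2 - z3 ≤ (r2 : ℤ) ∧
  -(r2 : ℤ) + 1 ≤ z1 ∧ z1 ≤ 1 ∧
  -(r1 : ℤ) + 1 ≤ z2 ∧ z2 ≤ 1 ∧
  -(r3 : ℤ) + 1 ≤ z1 + z2 - z3 ∧ z1 + z2 - z3 ≤ 1

open Set Function
open scoped Finset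

theorem sum_mem_Ioc_of_forall_mem_Ioc {α : Type*} {V : Finset α} (hV : V.Nonempty)
    {x : α → ℝ} (hx : ∀ a ∈ V, x a ∈ Ioc (-1 : ℝ) 0) : ∑ a ∈ V, x a ∈ Ioc (-(#V : ℝ)) 0 := by
  refine ⟨?_, Finset.sum_nonpos fun a ha => (hx a ha).2⟩
  simpa using Finset.sum_lt_sum_of_nonempty hV fun a ha => (hx a ha).1

theorem exists_forall_mem_Ioc_sum_eq {α ι : Type*} (W : ι → Finset α)
    (hW : Pairwise (Disjoint on W)) (s : ι → ℝ) (hs : ∀ i, s i ∈ Ioc (-(#(W i) : ℝ)) 0) :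
    ∃ x : α → ℝ, (∀ a, x a ∈ Ioc (-1 : ℝ) 0) ∧ ∀ i, ∑ a ∈ W i, x a = s i := by
  classical
  have hcard (i : ι) : (0 : ℝ) < #(W i) := by linarith [(hs i).1, (hs i).2]
  have hblock {a : α} (h : ∃ i, a ∈ W i) {i : ι} (hi : a ∈ W i) : h.choose = i := by
    by_contra hne
    exact Finset.disjoint_left.mp (hW hne) h.choose_spec hi
  let x : α → ℝ := fun a => if h : ∃ i, a ∈ W i then s h.choose / #(W h.choose) else 0
  have hx {i : ι} {a : α} (ha : a ∈ W i) : x a = s i / #(W i) := by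
    have h : ∃ j, a ∈ W j := ⟨i, ha⟩
    simp only [x, dif_pos h, hblock h ha]
  refine ⟨x, fun a => ?_, fun i => ?_⟩
  · by_cases h : ∃ i, a ∈ W i
    · obtain ⟨i, ha⟩ := h
      rw [hx ha]
      refine ⟨?_, div_nonpos_of_nonpos_of_nonneg (hs i).2 (hcard i).le⟩
      rw [lt_div_iff₀ (hcard i)]
      linarith [(hs i).1]
    · simp [x, h]
  · rw [Finset.sum_congr rfl fun a => hx, Finset.sum_const, nsmul_eq_mul,
      mul_div_cancel₀ _ (hcard i).ne']

theorem exists_mem_Ioc_mem_Ico {α : Type*} [LinearOrder α] [DenselyOrdered α] {a b c d : α}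
    (hab : a < b) (hcd : c < d) (hcb : c ≤ b) (had : a < d) : ∃ t ∈ Ioc a b, t ∈ Ico c d := by
  obtain ⟨e, hae, he⟩ := exists_between (lt_min hab had)
  exact ⟨max c e, ⟨lt_max_of_lt_right hae, max_le hcb (he.le.trans (min_le_left _ _))⟩,
    le_max_left _ _, max_lt hcd (he.trans_le (min_le_right _ _))⟩

theorem exists_shift_mem_Ioc {p q a b : ℝ} (hp : 0 < p) (hq : 0 < q) (ha : a < 1) (hb : b < 1)
    (hpa : -p < a) (hqb : -q < b) (hab : a - b < q) (hba : b - a < p) :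
    ∃ u ∈ Ioc (-1 : ℝ) 0, a + u ∈ Ioc (-p) 0 ∧ b + u ∈ Ioc (-q) 0 := by
  set m := max 0 (max a b)
  have h0 : 0 ≤ m := le_max_left _ _
  have ham : a ≤ m := (le_max_left a b).trans (le_max_right _ _)
  have hbm : b ≤ m := (le_max_right a b).trans (le_max_right _ _)
  have hm1 : m < 1 := max_lt one_pos (max_lt ha hb)
  have hmp : m < a + p := max_lt (by linarith) (max_lt (by linarith) (by linarith))
  have hmq : m < b + q := max_lt (by linarith) (max_lt (by linarith) (by linarith))
  exact ⟨-m, ⟨by linarith, by linarith⟩, ⟨by linarith, by linarith⟩, by linarith, by linarith⟩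

section BlockSums

variable {r1 r2 r3 : ℕ} {c1 c2 c3 : ℤ}

theorem inC3_of_blockSums {s1 s2 u t : ℝ}
    (hs1 : s1 ∈ Ioc (-(r1 : ℝ)) 0) (hs2 : s2 ∈ Ioc (-(r2 : ℝ)) 0) (hu : u ∈ Ioc (-1 : ℝ) 0)
    (ht : t ∈ Ioc (-((r3 : ℝ) - 1)) 0) (h1 : s2 - u ∈ Ioc ((c1 : ℝ) - 1) c1)
    (h2 : s1 - u ∈ Ioc ((c2 : ℝ) - 1) c2) (h3 : s1 + s2 - t - 2 * u ∈ Ioc ((c3 : ℝ) - 1) c3) :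
    inC3 r1 r2 r3 c1 c2 c3 := by
  rw [mem_Ioc] at hs1 hs2 hu ht h1 h2 h3
  refine ⟨?_, ?_, ?_, ?_, ?_, ?_, ?_, ?_, ?_, ?_, ?_, ?_⟩ <;> apply Int.le_of_lt_add_one <;>
    rify <;> linarith

theorem exists_taus_of_inC3 (hr2 : 0 < r2) (hr3 : 0 < r3) (hc : inC3 r1 r2 r3 c1 c2 c3) :
    ∃ a b : ℝ, a ∈ Ioc ((c1 : ℝ) - 1) c1 ∧ b ∈ Ioc ((c2 : ℝ) - 1) c2 ∧
      a + b - c3 ∈ Ioc (-(r3 : ℝ)) 0 ∧ a < 1 ∧ b < 1 ∧ -(r2 : ℝ) < a ∧ -(r1 : ℝ) < b ∧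
      a - b < r1 ∧ b - a < r2 := by
  obtain ⟨h1, h2, -, -, -, -, h7, h8, h9, h10, h11, h12⟩ := hc
  have hr2' : (1 : ℝ) ≤ r2 := Nat.one_le_cast.mpr hr2
  rify at hr3 h1 h2 h7 h8 h9 h10 h11 h12
  -- `a = c₁ - (σ/2 + δ)` and `b = c₂ - (σ/2 - δ)`: `σ ≥ 1` is forced when `c₁ + c₂ - c₃ = 1`,
  -- and `δ` keeps `a - b < r₁` when `c₁ - c₂ = r₁`, and `b - a < r₂` when `c₂ - c₁ = r₂`.
  obtain ⟨δ, hδ, hδ1, hδ2⟩ : ∃ δ : ℝ, |δ| ≤ 1 / 8 ∧ (c1 - c2 : ℝ) - 2 * δ < r1 ∧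
      (c2 - c1 : ℝ) + 2 * δ < r2 := by
    rcases le_or_gt c2 c1 with h | h
    · rify at h
      exact ⟨1 / 8, by norm_num, by linarith, by linarith⟩
    · rw [← Int.add_one_le_iff] at h
      rify at h
      exact ⟨-(1 / 8), by norm_num, by linarith, by linarith⟩
  set σ : ℝ := max (1 / 2) (c1 + c2 - c3)
  have hσ1 : 1 / 2 ≤ σ := le_max_left _ _
  have hσ2 : (c1 + c2 - c3 : ℝ) ≤ σ := le_max_right _ _
  have hσ3 : σ ≤ 1 := max_le (by norm_num) h12
  have hσ4 : σ < c1 + c2 - c3 + r3 := max_lt (by linarith) (by linarith)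
  obtain ⟨hδl, hδu⟩ := abs_le.mp hδ
  refine ⟨c1 - (σ / 2 + δ), c2 - (σ / 2 - δ), ⟨?_, ?_⟩, ⟨?_, ?_⟩, ⟨?_, ?_⟩,
    ?_, ?_, ?_, ?_, ?_, ?_⟩ <;> linarith

theorem exists_blockSums_of_inC3 (hr1 : 0 < r1) (hr2 : 0 < r2) (hr3 : 1 < r3)
    (hc : inC3 r1 r2 r3 c1 c2 c3) :
    ∃ s1 s2 u t : ℝ, s1 ∈ Ioc (-(r1 : ℝ)) 0 ∧ s2 ∈ Ioc (-(r2 : ℝ)) 0 ∧ u ∈ Ioc (-1 : ℝ) 0 ∧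
      t ∈ Ioc (-((r3 : ℝ) - 1)) 0 ∧ s2 - u ∈ Ioc ((c1 : ℝ) - 1) c1 ∧
      s1 - u ∈ Ioc ((c2 : ℝ) - 1) c2 ∧ s1 + s2 - t - 2 * u ∈ Ioc ((c3 : ℝ) - 1) c3 := by
  obtain ⟨a, b, ha, hb, hP, ha1, hb1, hra, hrb, hab, hba⟩ :=
    exists_taus_of_inC3 hr2 (by omega) hc
  rify at hr1 hr2 hr3
  obtain ⟨u, hu, hau, hbu⟩ := exists_shift_mem_Ioc hr2 hr1 ha1 hb1 hra hrb hab hba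
  obtain ⟨t, ht, htP⟩ := exists_mem_Ioc_mem_Ico (a := -((r3 : ℝ) - 1)) (b := 0)
    (c := a + b - c3) (d := a + b - c3 + 1) (by linarith) (by linarith) hP.2 (by linarith [hP.1])
  refine ⟨b + u, a + u, u, t, hbu, hau, hu, ht, by simpa using ha, by simpa using hb, ?_⟩
  constructor <;> linarith [htP.1, htP.2]

end BlockSums

section Partition

variable {α : Type*} [DecidableEq α] {V1 V2 V3 : Finset α} {vlast : α}

theorem exists_forall_mem_Ioc_blockSums_eq (hd12 : Disjoint V1 V2) (hd13 : Disjoint V1 V3)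
    (hd23 : Disjoint V2 V3) (hlast : vlast ∈ V3) {s1 s2 u t : ℝ}
    (hs1 : s1 ∈ Ioc (-(#V1 : ℝ)) 0) (hs2 : s2 ∈ Ioc (-(#V2 : ℝ)) 0) (hu : u ∈ Ioc (-1 : ℝ) 0)
    (ht : t ∈ Ioc (-(#(V3.erase vlast) : ℝ)) 0) :
    ∃ x : α → ℝ, (∀ k, x k ∈ Ioc (-1 : ℝ) 0) ∧ ∑ k ∈ V1, x k = s1 ∧ ∑ k ∈ V2, x k = s2 ∧
      x vlast = u ∧ ∑ k ∈ V3, x k = u + t := by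
  have hdisj : Pairwise (Disjoint on ![V1, V2, {vlast}, V3.erase vlast]) := by
    have hv1 : vlast ∉ V1 := Finset.disjoint_right.mp hd13 hlast
    have hv2 : vlast ∉ V2 := Finset.disjoint_right.mp hd23 hlast
    have h13 := hd13.mono_right (V3.erase_subset vlast)
    have h23 := hd23.mono_right (V3.erase_subset vlast)
    intro i j hij
    fin_cases i <;> fin_cases j <;> simp_all [onFun, disjoint_comm]
  obtain ⟨x, hx, hsum⟩ := exists_forall_mem_Ioc_sum_eq _ hdisj ![s1, s2, u, t] (by
    intro i
    fin_cases i
    · exact hs1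
    · exact hs2
    · simpa using hu
    · exact ht)
  have hu : x vlast = u := by simpa using hsum 2
  refine ⟨x, hx, hsum 0, hsum 1, hu, ?_⟩
  rw [← Finset.add_sum_erase V3 x hlast, hu]
  exact congrArg _ (hsum 3)

end Partition

theorem tau3_eq_of_disjoint {d : ℕ} {V1 V2 : Finset (Fin d)} (h : Disjoint V1 V2)
    (Vj : Finset (Fin d)) (vlast : Fin d) (x : Fin d → ℝ) :
    tau3 d V1 V2 Vj vlast x = ∑ k ∈ V1, x k + ∑ k ∈ V2, x k - ∑ k ∈ Vj, x k - x vlast := by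
  rw [tau3, Finset.sum_union h]

theorem stmt_12_general (r1 r2 r3 : ℕ) (h1 : 2 ≤ r1) (h12 : r1 ≤ r2) (h23 : r2 ≤ r3)
    (d : ℕ)
    (V1 V2 V3 : Finset (Fin d))
    (hc1 : V1.card = r1) (hc2 : V2.card = r2) (hc3 : V3.card = r3)
    (hd12 : Disjoint V1 V2) (hd13 : Disjoint V1 V3) (hd23 : Disjoint V2 V3)
    (vlast : Fin d) (hlast : vlast ∈ V3)
    (c1 c2 c3 : ℤ) :
    (∃ x : Fin d → ℝ, (∀ k, -1 < x k ∧ x k ≤ 0) ∧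
      ((c1 : ℝ) - 1 < tau3 d V1 V2 V1 vlast x ∧ tau3 d V1 V2 V1 vlast x ≤ (c1 : ℝ)) ∧
      ((c2 : ℝ) - 1 < tau3 d V1 V2 V2 vlast x ∧ tau3 d V1 V2 V2 vlast x ≤ (c2 : ℝ)) ∧
      ((c3 : ℝ) - 1 < tau3 d V1 V2 V3 vlast x ∧ tau3 d V1 V2 V3 vlast x ≤ (c3 : ℝ)))
    ↔ inC3 r1 r2 r3 c1 c2 c3 := by
  have hcard3 : (#(V3.erase vlast) : ℝ) = r3 - 1 := by
    rw [Finset.card_erase_of_mem hlast, hc3, Nat.cast_pred (by omega)]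
  constructor
  · rintro ⟨x, hx, hτ1, hτ2, hτ3⟩
    have hbox {V : Finset (Fin d)} (hV : 0 < #V) : ∑ k ∈ V, x k ∈ Ioc (-(#V : ℝ)) 0 :=
      sum_mem_Ioc_of_forall_mem_Ioc (Finset.card_pos.mp hV) fun k _ => hx k
    rw [tau3_eq_of_disjoint hd12] at hτ1 hτ2 hτ3
    rw [← Finset.add_sum_erase V3 x hlast] at hτ3
    refine inC3_of_blockSums (hc1 ▸ hbox (by omega)) (hc2 ▸ hbox (by omega)) (hx vlast)
      (hcard3 ▸ hbox (by rw [Finset.card_erase_of_mem hlast]; omega)) (by simpa using hτ1)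
      (by simpa using hτ2) ⟨by linarith [hτ3.1], by linarith [hτ3.2]⟩
  · intro hc
    obtain ⟨s1, s2, u, t, hs1, hs2, hu, ht, hτ1, hτ2, hτ3⟩ :=
      exists_blockSums_of_inC3 (by omega) (by omega) (by omega) hc
    obtain ⟨x, hx, hS1, hS2, hxu, hS3⟩ := exists_forall_mem_Ioc_blockSums_eq hd12 hd13 hd23 hlast
      (by rwa [hc1]) (by rwa [hc2]) hu (by rwa [hcard3])
    refine ⟨x, hx, ?_, ?_, ?_⟩ <;> simp only [tau3_eq_of_disjoint hd12, hS1, hS2, hS3, hxu]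
    · simpa using hτ1
    · simpa using hτ2
    · constructor <;> linarith [hτ3.1, hτ3.2]

/-- For `n = 3`, `2 ≤ r_1 ≤ r_2 ≤ r_3` and `c ∈ ℤ^3` the following are equivalent:
(a) there is `x ∈ (-1,0]^d` with `c_j - 1 < τ_j(x) ≤ c_j` for `j = 1,2,3`;
(b) `c ∈ C(r_1,r_2,r_3)`.  (These classes index the conic divisorial ideals of
`k[K_{r_1,r_2,r_3}]`.) -/
theorem stmt_12 (r1 r2 r3 : ℕ) (h1 : 2 ≤ r1) (h12 : r1 ≤ r2) (h23 : r2 ≤ r3)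
    (d : ℕ) (hd : d = r1 + r2 + r3)
    (V1 V2 V3 : Finset (Fin d))
    (hc1 : V1.card = r1) (hc2 : V2.card = r2) (hc3 : V3.card = r3)
    (hd12 : Disjoint V1 V2) (hd13 : Disjoint V1 V3) (hd23 : Disjoint V2 V3)
    (hcover : V1 ∪ V2 ∪ V3 = Finset.univ)
    (vlast : Fin d) (hvlast : (vlast : ℕ) = d - 1) (hlast : vlast ∈ V3)
    (c1 c2 c3 : ℤ) :
    (∃ x : Fin d → ℝ, (∀ k, -1 < x k ∧ x k ≤ 0) ∧
      ((c1 : ℝ) - 1 < tau3 d V1 V2 V1 vlast x ∧ tau3 d V1 V2 V1 vlast x ≤ (c1 : ℝ)) ∧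
      ((c2 : ℝ) - 1 < tau3 d V1 V2 V2 vlast x ∧ tau3 d V1 V2 V2 vlast x ≤ (c2 : ℝ)) ∧
      ((c3 : ℝ) - 1 < tau3 d V1 V2 V3 vlast x ∧ tau3 d V1 V2 V3 vlast x ≤ (c3 : ℝ)))
    ↔ inC3 r1 r2 r3 c1 c2 c3 :=
  stmt_12_general r1 r2 r3 h1 h12 h23 d V1 V2 V3 hc1 hc2 hc3 hd12 hd13 hd23 vlast hlast c1 c2 c3
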